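/- For d ≥ 1 and 1 ≤ j ≤ d, B^+_{d,j}(t) = E_2((1+t)^{d−1} A_{d,j}(t)), where E_2 is the operator that extracts coefficients of even powers: E_2(Σ c_k t^k) = Σ c_{2k} t^k. -/

import Mathlib

/-- The signed value at position `i` of `f : Fin d → Fin d × Bool`. -/
def BVal (d : ℕ) (f : Fin d → Fin d × Bool) (i : Fin d) : ℤ :=
  if (f i).2 then ((f i).1 : ℤ) + 1 else -(((f i).1 : ℤ) + 1)

/-- `σ_{k+1}` in one-line notation (`k` is `0`-based); `0` out of range. -/
def sval (d : ℕ) (f : Fin d → Fin d × Bool) (k : ℕ) : ℤ :=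
  if h : k < d then BVal d f ⟨k, h⟩ else 0

/-- `f` encodes a signed permutation of `{1,…,d}`. -/
def IsSignedPerm (d : ℕ) (f : Fin d → Fin d × Bool) : Prop :=
  Function.Injective fun i => (f i).1

instance (d : ℕ) (f : Fin d → Fin d × Bool) : Decidable (IsSignedPerm d f) := by
  unfold IsSignedPerm; infer_instance

/-- The type-B descent number: `|{i ∈ [0,d−1] : σ_i > σ_{i+1}}|` with `σ_0 = 0`. -/
def desB (d : ℕ) (f : Fin d → Fin d × Bool) : ℕ :=
  ((Finset.range d).filter fun i =>
    sval d f i < if i = 0 then (0 : ℤ) else sval d f (i - 1)).card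

/-- Signed permutations with `σ_1 = j` and `σ_d > 0`. -/
def BplusSet (d : ℕ) (j : ℤ) : Finset (Fin d → Fin d × Bool) :=
  Finset.univ.filter fun f => IsSignedPerm d f ∧ sval d f 0 = j ∧ 0 < sval d f (d - 1)

/-- Signed permutations with `σ_1 = j` and `σ_d < 0`. -/
def BminusSet (d : ℕ) (j : ℤ) : Finset (Fin d → Fin d × Bool) :=
  Finset.univ.filter fun f => IsSignedPerm d f ∧ sval d f 0 = j ∧ sval d f (d - 1) < 0

open Polynomial

/-- The `j`-Eulerian polynomial of type `B^+`:
`B^+_{d,j}(t) = ∑_{σ ∈ B_d, σ_1=j, σ_d>0} t^{des_B(σ)}`. -/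
noncomputable def BplusPoly (d : ℕ) (j : ℤ) : Polynomial ℝ :=
  ∑ f ∈ BplusSet d j, X ^ desB d f

/-- The `j`-Eulerian polynomial of type `B^-`:
`B^−_{d,j}(t) = ∑_{σ ∈ B_d, σ_1=j, σ_d<0} t^{des_B(σ)}`. -/
noncomputable def BminusPoly (d : ℕ) (j : ℤ) : Polynomial ℝ :=
  ∑ f ∈ BminusSet d j, X ^ desB d f

/-- The `j`-Eulerian polynomial of type `B`:
`B_{d,j}(t) = ∑_{σ ∈ B_d, σ_1=j} t^{des_B(σ)}`. -/
noncomputable def BPoly (d : ℕ) (j : ℤ) : Polynomial ℝ :=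
  ∑ f ∈ Finset.univ.filter (fun f : Fin d → Fin d × Bool =>
      IsSignedPerm d f ∧ sval d f 0 = j), X ^ desB d f


/-- `σ_{k+1}` of the permutation, as an element of `{1,…,d}` (`0` out of range). -/
def svalA (d : ℕ) (σ : Equiv.Perm (Fin d)) (k : ℕ) : ℕ :=
  if h : k < d then (σ ⟨k, h⟩ : ℕ) + 1 else 0

/-- The type-A descent number `des_A(σ) = |{i ∈ [d−1] : σ_i > σ_{i+1}}|`. -/
def desA (d : ℕ) (σ : Equiv.Perm (Fin d)) : ℕ :=
  ((Finset.range (d - 1)).filter fun i => svalA d σ (i + 1) < svalA d σ i).card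

/-- The `j`-Eulerian polynomial of type A:
`A_{d,j}(t) = ∑_{σ ∈ S_d, σ_1 = j} t^{des_A(σ)}`. -/
noncomputable def APoly (d j : ℕ) : Polynomial ℝ :=
  ∑ σ ∈ Finset.univ.filter (fun σ : Equiv.Perm (Fin d) => svalA d σ 0 = j),
    X ^ desA d σ

/-- The coefficient-extraction operator `E_r(∑_k c_k t^k) = ∑_k c_{rk} t^k`. -/
noncomputable def Eop (r : ℕ) (p : Polynomial ℝ) : Polynomial ℝ :=
  ∑ k ∈ Finset.range (p.natDegree + 1), C (p.coeff (r * k)) * X ^ k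

/-! Deleting the first letter `c` of a signed permutation and standardizing leaves a signed
permutation with some first letter `c'`; `des_B` drops by `prependDes c c'`, which depends only on
`c` and `c'`, and the sign of the last letter is unchanged. Hence
`F_{d,c}(t) = t B⁺_{d,c}(t²) + B⁻_{d,c}(t²)` satisfies
`F_{d+1,c} = ∑_{c'} t^{2 prependDes c c'} F_{d,c'}`, and the same recursion on all-positive signed
permutations gives `P_{d+1,j} = (1+t) ∑_k t^{[k<j]} P_{d,k}` for `P_{d,j} = (1+t)^{d-1} A_{d,j}`.
Induction on `d` yields `F_{d,j} = t P_{d,j}` and `F_{d,-j} = t² P_{d,d+1-j}`: the step rests on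
`t^{2e} + t = (1+t) t^e` for `e ∈ {0,1}` and the symmetry `k ↦ d+1-k`. The odd part of `F_{d,j}`
is `t B⁺_{d,j}(t²)`, so `B⁺_{d,j}(t²)` is the even part of `P_{d,j}`. -/

open Polynomial Finset

lemma sum_sq_pow_ite_add {R ι : Type*} [CommSemiring R] (x : R) (s : Finset ι) (q : ι → Prop)
    [DecidablePred q] (p : ι → R) :
    ∑ k ∈ s, (x ^ 2) ^ (if q k then 1 else 0) * p k + x * ∑ k ∈ s, p k =
      (1 + x) * ∑ k ∈ s, x ^ (if q k then 1 else 0) * p k := by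
  rw [mul_sum, mul_sum, ← sum_add_distrib]
  refine sum_congr rfl fun k _ => ?_
  split_ifs <;> ring

lemma sum_range_succ_reflect {M : Type*} [AddCommMonoid M] (f : ℕ → M) (n : ℕ) :
    ∑ k ∈ range (n + 1), f (n - k) = ∑ k ∈ range (n + 1), f k := by
  simpa using sum_range_reflect f (n + 1)

lemma sum_sq_pow_lt_add_reflect {R : Type*} [CommSemiring R] (x : R) (L : ℕ → R) (n a : ℕ) :
    ∑ k ∈ range (n + 1), ((x ^ 2) ^ (if k < a then 1 else 0) * (x * L k) + x ^ 2 * L (n - k)) =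
      x * ((1 + x) * ∑ k ∈ range (n + 1), x ^ (if k < a then 1 else 0) * L k) := by
  rw [← sum_sq_pow_ite_add, sum_add_distrib, ← sum_range_succ_reflect L, mul_add, mul_sum,
    mul_sum, mul_sum]
  exact congrArg₂ (· + ·) (sum_congr rfl fun k _ => by ring) (sum_congr rfl fun k _ => by ring)

lemma sum_sq_pow_le_add_reflect {R : Type*} [CommSemiring R] (x : R) (L : ℕ → R) (n a : ℕ) :
    ∑ k ∈ range (n + 1),
        (x ^ 2 * (x * L k) + (x ^ 2) ^ (if a ≤ k then 1 else 0) * (x ^ 2 * L (n - k))) =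
      x ^ 2 * ((1 + x) * ∑ k ∈ range (n + 1), x ^ (if k < n + 1 - a then 1 else 0) * L k) := by
  have hrefl : ∑ k ∈ range (n + 1), (x ^ 2) ^ (if a ≤ k then 1 else 0) * L (n - k) =
      ∑ k ∈ range (n + 1), (x ^ 2) ^ (if k < n + 1 - a then 1 else 0) * L k := by
    rw [← sum_range_succ_reflect fun k => (x ^ 2) ^ (if k < n + 1 - a then 1 else 0) * L k]
    refine sum_congr rfl fun k hk => ?_
    rw [mem_range] at hk
    rw [if_congr (show a ≤ k ↔ n - k < n + 1 - a by omega) rfl rfl]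
  rw [← sum_sq_pow_ite_add, ← hrefl, sum_add_distrib, mul_add, mul_sum, mul_sum, mul_sum,
    add_comm]
  exact congrArg₂ (· + ·) (sum_congr rfl fun k _ => by ring) (sum_congr rfl fun k _ => by ring)

lemma coeff_Eop {r : ℕ} (hr : r ≠ 0) (p : ℝ[X]) (n : ℕ) :
    (Eop r p).coeff n = p.coeff (r * n) := by
  rw [Eop, finsetSum_coeff]
  simp only [coeff_C_mul_X_pow]
  rw [sum_ite_eq]
  split_ifs with h
  · rfl
  · exact (coeff_eq_zero_of_natDegree_lt ((by simpa using h : p.natDegree < n).trans_le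
      (Nat.le_mul_of_pos_left n (Nat.pos_of_ne_zero hr)))).symm

def signedVal (v : ℕ) (s : Bool) : ℤ := if s then (v : ℤ) + 1 else -((v : ℤ) + 1)

lemma sval_of_lt {d k : ℕ} (f : Fin d → Fin d × Bool) (h : k < d) :
    sval d f k = signedVal (f ⟨k, h⟩).1 (f ⟨k, h⟩).2 := by
  rw [sval, dif_pos h]; rfl

lemma signedVal_pos_iff {v : ℕ} {s : Bool} : 0 < signedVal v s ↔ s = true := by
  unfold signedVal; split_ifs <;> simp_all

lemma signedVal_inj {v w : ℕ} {s t : Bool} :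
    signedVal v s = signedVal w t ↔ v = w ∧ s = t := by
  cases s <;> cases t <;> simp [signedVal] <;> omega

lemma natCast_succ_eq_signedVal (v : ℕ) : ((v + 1 : ℕ) : ℤ) = signedVal v true := by
  simp [signedVal]

lemma sval_zero_eq_signedVal_iff {n : ℕ} (f : Fin (n + 1) → Fin (n + 1) × Bool)
    (a : Fin (n + 1)) (s : Bool) : sval (n + 1) f 0 = signedVal a s ↔ f 0 = (a, s) := by
  rw [sval_of_lt f n.succ_pos, signedVal_inj, Prod.ext_iff, Fin.ext_iff]; rfl

/-- `liftAbove a` enumerates `ℕ \ {a}` increasingly; `lowerAbove a` inverts it (standardization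
after deleting the value `a`). -/
def liftAbove (a w : ℕ) : ℕ := if w < a then w else w + 1

def lowerAbove (a v : ℕ) : ℕ := if v < a then v else v - 1

lemma lowerAbove_liftAbove (a w : ℕ) : lowerAbove a (liftAbove a w) = w := by
  unfold lowerAbove liftAbove; split_ifs <;> omega

lemma liftAbove_lowerAbove {a v : ℕ} (h : v ≠ a) : liftAbove a (lowerAbove a v) = v := by
  unfold lowerAbove liftAbove; split_ifs <;> omega

lemma liftAbove_ne (a w : ℕ) : liftAbove a w ≠ a := by
  unfold liftAbove; split_ifs <;> omega

lemma liftAbove_lt {a w n : ℕ} (hw : w < n) : liftAbove a w < n + 1 := by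
  unfold liftAbove; split_ifs <;> omega

lemma lowerAbove_lt {a v n : ℕ} (ha : a < n + 1) (hv : v < n + 1) (hn : 0 < n) :
    lowerAbove a v < n := by
  unfold lowerAbove; split_ifs <;> omega

lemma signedVal_lowerAbove_lt_iff {a v w : ℕ} (s t : Bool) (hv : v ≠ a) (hw : w ≠ a) :
    signedVal (lowerAbove a v) s < signedVal (lowerAbove a w) t ↔
      signedVal v s < signedVal w t := by
  unfold signedVal lowerAbove; split_ifs <;> omega

def signedTail {n : ℕ} (f : Fin (n + 1) → Fin (n + 1) × Bool) : Fin n → Fin n × Bool :=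
  fun i => (⟨lowerAbove (f 0).1 (f i.succ).1,
    lowerAbove_lt (f 0).1.isLt (f i.succ).1.isLt i.pos⟩, (f i.succ).2)

def signedCons {n : ℕ} (a : Fin (n + 1)) (s : Bool) (g : Fin n → Fin n × Bool) :
    Fin (n + 1) → Fin (n + 1) × Bool :=
  Fin.cons (a, s) fun i => (⟨liftAbove a (g i).1, liftAbove_lt (g i).1.isLt⟩, (g i).2)

lemma signedTail_signedCons {n : ℕ} (a : Fin (n + 1)) (s : Bool) (g : Fin n → Fin n × Bool) :
    signedTail (signedCons a s g) = g := by
  funext i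
  simp [signedTail, signedCons, lowerAbove_liftAbove]

lemma IsSignedPerm.fst_succ_ne_fst_zero {n : ℕ} {f : Fin (n + 1) → Fin (n + 1) × Bool}
    (hf : IsSignedPerm (n + 1) f) (i : Fin n) : (f i.succ).1.val ≠ (f 0).1.val :=
  fun h => i.succ_ne_zero (hf (Fin.ext h))

lemma signedCons_signedTail {n : ℕ} {f : Fin (n + 1) → Fin (n + 1) × Bool}
    (hf : IsSignedPerm (n + 1) f) : signedCons (f 0).1 (f 0).2 (signedTail f) = f := by
  funext i
  induction i using Fin.cases with
  | zero => rfl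
  | succ i => simp [signedTail, signedCons, liftAbove_lowerAbove (hf.fst_succ_ne_fst_zero i)]

lemma IsSignedPerm.signedTail {n : ℕ} {f : Fin (n + 1) → Fin (n + 1) × Bool}
    (hf : IsSignedPerm (n + 1) f) : IsSignedPerm n (signedTail f) := by
  intro i j h
  have hv := congrArg (liftAbove (f 0).1 ∘ Fin.val) h
  simp only [Function.comp_apply, _root_.signedTail,
    liftAbove_lowerAbove (hf.fst_succ_ne_fst_zero _)] at hv
  exact Fin.succ_injective _ (hf (Fin.ext hv))

lemma IsSignedPerm.signedCons {n : ℕ} {g : Fin n → Fin n × Bool} (hg : IsSignedPerm n g)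
    (a : Fin (n + 1)) (s : Bool) : IsSignedPerm (n + 1) (signedCons a s g) := by
  change Function.Injective (Prod.fst ∘ Fin.cons _ _)
  rw [Fin.comp_cons, Fin.cons_injective_iff]
  refine ⟨fun ⟨i, hi⟩ => liftAbove_ne a (g i).1 (congrArg Fin.val hi), fun i j h => ?_⟩
  have hv := congrArg (lowerAbove a ∘ Fin.val) h
  simp only [Function.comp_apply, lowerAbove_liftAbove] at hv
  exact hg (Fin.ext hv)

lemma sval_signedTail {n i : ℕ} (f : Fin (n + 1) → Fin (n + 1) × Bool) (hi : i < n) :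
    sval n (signedTail f) i =
      signedVal (lowerAbove (f 0).1 (f ⟨i + 1, by omega⟩).1) (f ⟨i + 1, by omega⟩).2 := by
  rw [sval_of_lt _ hi]; rfl

lemma sval_signedTail_lt_iff {n i j : ℕ} {f : Fin (n + 1) → Fin (n + 1) × Bool}
    (hf : IsSignedPerm (n + 1) f) (hi : i < n) (hj : j < n) :
    sval n (signedTail f) i < sval n (signedTail f) j ↔
      sval (n + 1) f (i + 1) < sval (n + 1) f (j + 1) := by
  rw [sval_signedTail f hi, sval_signedTail f hj, sval_of_lt f (by omega),
    sval_of_lt f (by omega)]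
  exact signedVal_lowerAbove_lt_iff _ _ (hf.fst_succ_ne_fst_zero ⟨i, hi⟩)
    (hf.fst_succ_ne_fst_zero ⟨j, hj⟩)

def lastPos (d : ℕ) (f : Fin d → Fin d × Bool) : ℕ := if 0 < sval d f (d - 1) then 1 else 0

lemma lastPos_signedTail {n : ℕ} (f : Fin (n + 2) → Fin (n + 2) × Bool) :
    lastPos (n + 1) (signedTail f) = lastPos (n + 2) f := by
  rw [lastPos, lastPos, show n + 2 - 1 = n + 1 from rfl, Nat.add_sub_cancel,
    sval_signedTail f n.lt_add_one, sval_of_lt f (show n + 1 < n + 2 by omega)]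
  simp only [signedVal_pos_iff]

lemma desB_succ {n : ℕ} (f : Fin (n + 1) → Fin (n + 1) × Bool) :
    desB (n + 1) f = (if sval (n + 1) f 0 < 0 then 1 else 0) +
      ∑ i ∈ range n, if sval (n + 1) f (i + 1) < sval (n + 1) f i then 1 else 0 := by
  rw [desB, card_filter, sum_range_succ', add_comm]
  simp only [Nat.add_one_ne_zero, ↓reduceIte, Nat.add_sub_cancel]

lemma desB_signedTail {n : ℕ} {f : Fin (n + 2) → Fin (n + 2) × Bool}
    (hf : IsSignedPerm (n + 2) f) :
    desB (n + 2) f + (if sval (n + 1) (signedTail f) 0 < 0 then 1 else 0) =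
      (if sval (n + 2) f 0 < 0 then 1 else 0) +
        (if sval (n + 2) f 1 < sval (n + 2) f 0 then 1 else 0) + desB (n + 1) (signedTail f) := by
  have htail : ∀ i ∈ range n,
      (if sval (n + 1) (signedTail f) (i + 1) < sval (n + 1) (signedTail f) i then 1 else 0) =
        if sval (n + 2) f (i + 1 + 1) < sval (n + 2) f (i + 1) then 1 else 0 :=
    fun i hi => by
      rw [mem_range] at hi
      exact if_congr (sval_signedTail_lt_iff hf (by omega) (by omega)) rfl rfl
  rw [desB_succ f, desB_succ (signedTail f), sum_range_succ' _ n, sum_congr rfl htail]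
  ring

/-- The growth of `des_B` when a signed word whose first letter standardizes to `c'` gets the new
first letter `c`. -/
def prependDes (c c' : ℤ) : ℕ :=
  if 0 < c then (if 0 < c' ∧ c' < c then 1 else 0) else (if 0 < c' ∨ c' ≤ c then 1 else 0)

lemma prependDes_add_ite {a v : ℕ} (hv : v ≠ a) (s t : Bool) :
    prependDes (signedVal a s) (signedVal (lowerAbove a v) t) +
        (if signedVal (lowerAbove a v) t < 0 then 1 else 0) =
      (if signedVal a s < 0 then 1 else 0) + (if signedVal v t < signedVal a s then 1 else 0) := by
  unfold prependDes signedVal lowerAbove; split_ifs <;> omega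

lemma desB_eq_prependDes_add {n : ℕ} {f : Fin (n + 2) → Fin (n + 2) × Bool}
    (hf : IsSignedPerm (n + 2) f) :
    desB (n + 2) f =
      prependDes (sval (n + 2) f 0) (sval (n + 1) (signedTail f) 0) +
        desB (n + 1) (signedTail f) := by
  have hspec : prependDes (sval (n + 2) f 0) (sval (n + 1) (signedTail f) 0) +
        (if sval (n + 1) (signedTail f) 0 < 0 then 1 else 0) =
      (if sval (n + 2) f 0 < 0 then 1 else 0) +
        (if sval (n + 2) f 1 < sval (n + 2) f 0 then 1 else 0) := by
    rw [sval_signedTail f n.succ_pos, sval_of_lt f (show 0 < n + 2 by omega),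
      sval_of_lt f (show 1 < n + 2 by omega)]
    exact prependDes_add_ite (hf.fst_succ_ne_fst_zero 0) _ _
  have := desB_signedTail hf
  omega

def signedPerms (d : ℕ) : Finset (Fin d → Fin d × Bool) := univ.filter (IsSignedPerm d)

def signedPermsHead (d : ℕ) (c : ℤ) : Finset (Fin d → Fin d × Bool) :=
  univ.filter fun f => IsSignedPerm d f ∧ sval d f 0 = c

lemma mem_signedPermsHead {d : ℕ} {c : ℤ} {f : Fin d → Fin d × Bool} :
    f ∈ signedPermsHead d c ↔ IsSignedPerm d f ∧ sval d f 0 = c := by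
  simp [signedPermsHead]

section Sums

variable {M : Type*} [AddCommMonoid M] {n : ℕ}

lemma sum_signedPermsHead_signedTail (a : Fin (n + 1)) (s : Bool)
    (g : (Fin n → Fin n × Bool) → M) :
    ∑ f ∈ signedPermsHead (n + 1) (signedVal a s), g (signedTail f) =
      ∑ f ∈ signedPerms n, g f := by
  have mem_head : ∀ f, f ∈ signedPermsHead (n + 1) (signedVal a s) ↔
      IsSignedPerm (n + 1) f ∧ f 0 = (a, s) := fun f => by
    rw [mem_signedPermsHead, sval_zero_eq_signedVal_iff]
  refine sum_nbij' signedTail (signedCons a s) (fun f hf => ?_) (fun g hg => ?_)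
    (fun f hf => ?_) (fun g _ => signedTail_signedCons a s g) (fun _ _ => rfl)
  · simpa [signedPerms] using ((mem_head f).1 hf).1.signedTail
  · have hg : IsSignedPerm n g := by simpa [signedPerms] using hg
    exact (mem_head _).2 ⟨hg.signedCons a s, rfl⟩
  · obtain ⟨hf, h0⟩ := (mem_head f).1 hf
    conv_rhs => rw [← signedCons_signedTail hf, h0]

lemma sum_signedPerms_succ (g : (Fin (n + 1) → Fin (n + 1) × Bool) → M) :
    ∑ f ∈ signedPerms (n + 1), g f =
      ∑ k ∈ range (n + 1), ∑ t : Bool,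
        ∑ f ∈ signedPermsHead (n + 1) (signedVal k t), g f := by
  rw [← sum_fiberwise (signedPerms (n + 1)) (fun f => f 0) g, Fintype.sum_prod_type,
    ← Fin.sum_univ_eq_sum_range
      (fun k => ∑ t : Bool, ∑ f ∈ signedPermsHead (n + 1) (signedVal k t), g f)]
  refine sum_congr rfl fun a _ => sum_congr rfl fun t _ => sum_congr ?_ fun _ _ => rfl
  ext f
  simp [signedPerms, mem_signedPermsHead, sval_zero_eq_signedVal_iff]

lemma sum_signedPermsHead_succ (a : Fin (n + 2)) (s : Bool)
    (F : ℕ → (Fin (n + 1) → Fin (n + 1) × Bool) → M) :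
    ∑ f ∈ signedPermsHead (n + 2) (signedVal a s), F (desB (n + 2) f) (signedTail f) =
      ∑ k ∈ range (n + 1), ∑ t : Bool, ∑ g ∈ signedPermsHead (n + 1) (signedVal k t),
        F (prependDes (signedVal a s) (signedVal k t) + desB (n + 1) g) g := by
  let G g := F (prependDes (signedVal a s) (sval (n + 1) g 0) + desB (n + 1) g) g
  calc _ = ∑ f ∈ signedPermsHead (n + 2) (signedVal a s), G (signedTail f) :=
        sum_congr rfl fun f hf => by
          obtain ⟨hf, h0⟩ := mem_signedPermsHead.1 hf
          rw [desB_eq_prependDes_add hf, h0]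
    _ = _ := by rw [sum_signedPermsHead_signedTail, sum_signedPerms_succ]
    _ = _ := sum_congr rfl fun k _ => sum_congr rfl fun t _ => sum_congr rfl fun g hg => by
          simp only [G, (mem_signedPermsHead.1 hg).2]

end Sums

section PrependDes

variable {a k : ℕ}

lemma prependDes_true_true :
    prependDes (signedVal a true) (signedVal k true) = if k < a then 1 else 0 := by
  simp only [prependDes, signedVal]; split_ifs <;> omega

lemma prependDes_true_false : prependDes (signedVal a true) (signedVal k false) = 0 := by
  simp only [prependDes, signedVal]; split_ifs <;> omega

lemma prependDes_false_true : prependDes (signedVal a false) (signedVal k true) = 1 := by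
  simp only [prependDes, signedVal]; split_ifs <;> omega

lemma prependDes_false_false :
    prependDes (signedVal a false) (signedVal k false) = if a ≤ k then 1 else 0 := by
  simp only [prependDes, signedVal]; split_ifs <;> omega

end PrependDes

/-- `t · B⁺_{d,c}(t²) + B⁻_{d,c}(t²)`. -/
noncomputable def BpmPoly (d : ℕ) (c : ℤ) : ℝ[X] :=
  ∑ f ∈ signedPermsHead d c, X ^ (2 * desB d f + lastPos d f)

lemma coeff_BplusPoly (d : ℕ) (c : ℤ) (n : ℕ) :
    (BplusPoly d c).coeff n = (BpmPoly d c).coeff (2 * n + 1) := by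
  rw [BplusPoly, BpmPoly, finsetSum_coeff, finsetSum_coeff, BplusSet, signedPermsHead,
    sum_filter, sum_filter]
  refine sum_congr rfl fun f _ => ?_
  simp only [coeff_X_pow, lastPos, ite_and]
  split_ifs <;> first | rfl | omega

lemma BpmPoly_succ {n a : ℕ} (ha : a < n + 2) (s : Bool) :
    BpmPoly (n + 2) (signedVal a s) = ∑ k ∈ range (n + 1), ∑ t : Bool,
      (X ^ 2) ^ prependDes (signedVal a s) (signedVal k t) * BpmPoly (n + 1) (signedVal k t) := by
  have h := sum_signedPermsHead_succ (M := ℝ[X]) ⟨a, ha⟩ s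
    fun e g => X ^ (2 * e + lastPos (n + 1) g)
  simp only [lastPos_signedTail] at h
  rw [BpmPoly, h]
  simp only [BpmPoly, mul_sum, ← pow_mul, ← pow_add, mul_add, add_assoc]

noncomputable def APolyPos (d : ℕ) (c : ℤ) : ℝ[X] :=
  ∑ f ∈ signedPermsHead d c with ∀ i, (f i).2 = true, X ^ desB d f

lemma sval_eq_svalA (d : ℕ) (σ : Equiv.Perm (Fin d)) (k : ℕ) :
    sval d (fun i => (σ i, true)) k = svalA d σ k := by
  unfold sval svalA; split_ifs <;> simp [BVal]

lemma desB_eq_desA (d : ℕ) (σ : Equiv.Perm (Fin d)) :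
    desB d (fun i => (σ i, true)) = desA d σ := by
  cases d with
  | zero => rfl
  | succ n =>
    rw [desB_succ, desA, card_filter]
    simp [sval_eq_svalA]

lemma APoly_eq_APolyPos (d j : ℕ) : APoly d j = APolyPos d j := by
  have mem_pos : ∀ f, f ∈ (signedPermsHead d j).filter (fun f => ∀ i, (f i).2 = true) ↔
      (IsSignedPerm d f ∧ sval d f 0 = j) ∧ ∀ i, (f i).2 = true := fun f => by
    rw [mem_filter, mem_signedPermsHead]
  have embed_eq : ∀ f ∈ (signedPermsHead d j).filter (fun f => ∀ i, (f i).2 = true),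
      (fun i => ((f i).1, true)) = f := fun f hf =>
    funext fun i => Prod.ext rfl (((mem_pos f).1 hf).2 i).symm
  refine sum_bij' (fun σ _ i => (σ i, true))
    (fun f hf => Equiv.ofBijective (fun i => (f i).1)
      (Finite.injective_iff_bijective.1 ((mem_pos f).1 hf).1.1))
    (fun σ hσ => (mem_pos _).2 ⟨⟨σ.injective, ?_⟩, fun _ => rfl⟩) (fun f hf => ?_)
    (fun σ _ => Equiv.ext fun _ => rfl) embed_eq (fun σ _ => by rw [desB_eq_desA])
  · rw [sval_eq_svalA, (mem_filter.1 hσ).2]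
  · rw [mem_filter, ← Nat.cast_inj (R := ℤ), ← sval_eq_svalA]
    exact ⟨mem_univ _, by simpa [embed_eq f hf] using ((mem_pos f).1 hf).1.2⟩

lemma APolyPos_succ {n a : ℕ} (ha : a < n + 2) :
    APolyPos (n + 2) (signedVal a true) = ∑ k ∈ range (n + 1),
      X ^ (if k < a then 1 else 0) * APolyPos (n + 1) (signedVal k true) := by
  have tail_pos : ∀ f ∈ signedPermsHead (n + 2) (signedVal a true),
      (∀ i, (f i).2 = true) ↔ ∀ i, (signedTail f i).2 = true := fun f hf => by
    have h0 := (sval_zero_eq_signedVal_iff f ⟨a, ha⟩ true).1 (mem_signedPermsHead.1 hf).2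
    simp [Fin.forall_fin_succ, h0, signedTail]
  have head_neg : ∀ k, ∀ g ∈ signedPermsHead (n + 1) (signedVal k false),
      ¬∀ i, (g i).2 = true := fun k g hg hpos => by
    have h0 := (mem_signedPermsHead.1 hg).2
    rw [sval_of_lt g n.succ_pos, signedVal_inj, hpos] at h0
    exact Bool.noConfusion h0.2
  have h := sum_signedPermsHead_succ (M := ℝ[X]) ⟨a, ha⟩ true
    fun e g => if ∀ i, (g i).2 = true then X ^ e else 0
  beta_reduce at h
  rw [APolyPos, sum_filter, sum_congr rfl fun f hf => if_congr (tail_pos f hf) rfl rfl, h]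
  refine sum_congr rfl fun k _ => ?_
  rw [Fintype.sum_bool, sum_eq_zero (fun g hg => if_neg (head_neg k g hg)), add_zero,
    APolyPos, sum_filter, mul_sum]
  refine sum_congr rfl fun g _ => ?_
  rw [prependDes_true_true, pow_add, mul_ite, mul_zero]

noncomputable def APolyLift (d a : ℕ) : ℝ[X] := (1 + X) ^ (d - 1) * APoly d (a + 1)

lemma APolyLift_succ {n a : ℕ} (ha : a < n + 2) :
    APolyLift (n + 2) a =
      (1 + X) * ∑ k ∈ range (n + 1), X ^ (if k < a then 1 else 0) * APolyLift (n + 1) k := by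
  simp only [APolyLift, APoly_eq_APolyPos, natCast_succ_eq_signedVal, APolyPos_succ ha, mul_sum]
  refine sum_congr rfl fun k _ => ?_
  simp only [Nat.add_sub_cancel, show n + 2 - 1 = n + 1 from rfl]
  ring

lemma BpmPoly_one :
    BpmPoly 1 (signedVal 0 true) = X * APolyLift 1 0 ∧
      BpmPoly 1 (signedVal 0 false) = X ^ 2 * APolyLift 1 0 := by
  have hA : APolyLift 1 0 = 1 := by
    have h : (signedPermsHead 1 (signedVal 0 true)).filter (fun f => ∀ i, (f i).2 = true) =
        {fun _ => (0, true)} := by decide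
    rw [APolyLift, APoly_eq_APolyPos, natCast_succ_eq_signedVal, APolyPos, h, sum_singleton,
      show desB 1 (fun _ => (0, true)) = 0 by decide]
    simp
  have hpos : signedPermsHead 1 (signedVal 0 true) = {fun _ => (0, true)} := by decide
  have hneg : signedPermsHead 1 (signedVal 0 false) = {fun _ => (0, false)} := by decide
  rw [BpmPoly, BpmPoly, hpos, hneg, sum_singleton, sum_singleton, hA, mul_one, mul_one,
    show 2 * desB 1 (fun _ => (0, true)) + lastPos 1 (fun _ => (0, true)) = 1 by decide,
    show 2 * desB 1 (fun _ => (0, false)) + lastPos 1 (fun _ => (0, false)) = 2 by decide, pow_one]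
  exact ⟨rfl, rfl⟩

lemma BpmPoly_eq_of_lt : ∀ {d a : ℕ}, a < d →
    BpmPoly d (signedVal a true) = X * APolyLift d a ∧
      BpmPoly d (signedVal a false) = X ^ 2 * APolyLift d (d - 1 - a)
  | 1, 0, _ => BpmPoly_one
  | n + 2, a, ha => by
    have IH : ∀ k ∈ range (n + 1),
        BpmPoly (n + 1) (signedVal k true) = X * APolyLift (n + 1) k ∧
        BpmPoly (n + 1) (signedVal k false) = X ^ 2 * APolyLift (n + 1) (n - k) :=
      fun k hk => by simpa using BpmPoly_eq_of_lt (mem_range.1 hk)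
    constructor
    · rw [BpmPoly_succ ha, APolyLift_succ ha, ← sum_sq_pow_lt_add_reflect]
      refine sum_congr rfl fun k hk => ?_
      rw [Fintype.sum_bool, prependDes_true_true, prependDes_true_false, (IH k hk).1,
        (IH k hk).2, pow_zero, one_mul]
    · rw [BpmPoly_succ ha, show n + 2 - 1 - a = n + 1 - a by omega, APolyLift_succ (by omega),
        ← sum_sq_pow_le_add_reflect]
      refine sum_congr rfl fun k hk => ?_
      rw [Fintype.sum_bool, prependDes_false_true, prependDes_false_false, (IH k hk).1,
        (IH k hk).2, pow_one]

theorem BplusPoly_eq_E2_general (d j : ℕ) (hj : 1 ≤ j) (hjd : j ≤ d) :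
    BplusPoly d (j : ℤ) = Eop 2 ((1 + X) ^ (d - 1) * APoly d j) := by
  obtain ⟨a, rfl⟩ : ∃ a, j = a + 1 := ⟨j - 1, by omega⟩
  ext n
  rw [coeff_Eop two_ne_zero, coeff_BplusPoly, natCast_succ_eq_signedVal,
    (BpmPoly_eq_of_lt (by omega)).1, coeff_X_mul]
  rfl

/-- for `d ≥ 1` and `1 ≤ j ≤ d`,
`B^+_{d,j}(t) = E_2((1+t)^{d−1} A_{d,j}(t))`. -/
theorem BplusPoly_eq_E2 (d j : ℕ) (hd : 1 ≤ d) (hj : 1 ≤ j) (hjd : j ≤ d) :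
    BplusPoly d (j : ℤ) = Eop 2 ((1 + X) ^ (d - 1) * APoly d j) :=
  BplusPoly_eq_E2_general d j hj hjd
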